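/- Let R be a commutative ring satisfying the stable range condition (S_s) for some s ≥ 1. Let (M,λ) be a formed space over R with 2·g_H(M,λ) ≥ s, and let l : M → R be a surjective R-linear functional. Then there exist e, f ∈ M with λ(e,f) = 1 such that the restriction of l to the submodule of M generated by e and f is surjective (equivalently, the ideal of R generated by l(e) and l(f) is all of R). -/
import Mathlib


/-- The stable range condition `(S_s)`: for every unimodular vector `(r₀, …, r_s) ∈ R^{s+1}`
there exist `t₀, …, t_{s-1}` such that `(r₀ + t₀ r_s, …, r_{s-1} + t_{s-1} r_s) ∈ R^s` is
unimodular. -/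
def StableRangeCond (R : Type) [CommRing R] (s : ℕ) : Prop :=
  ∀ r : Fin (s + 1) → R, Ideal.span (Set.range r) = ⊤ →
    ∃ t : Fin s → R,
      Ideal.span (Set.range fun i : Fin s => r i.castSucc + t i * r (Fin.last s)) = ⊤

/-- The hyperbolic genus of a module with a bilinear form: the largest `g` for which there is a
hyperbolic family `e₁, f₁, …, e_g, f_g`. -/
noncomputable def gH (R : Type) [CommRing R] (M : Type) (lam : M → M → R) : ℕ :=
  sSup {g : ℕ | ∃ e f : Fin g → M,
    (∀ i j, lam (e i) (f j) = if i = j then 1 else 0) ∧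
    (∀ i j, lam (e i) (e j) = 0) ∧ (∀ i j, lam (f i) (f j) = 0)}

lemma range_snoc' {α : Type*} {n : ℕ} (f : Fin n → α) (c : α) :
    Set.range (Fin.snoc f c : Fin (n+1) → α) = insert c (Set.range f) := by
  ext x
  constructor
  · rintro ⟨i, rfl⟩
    cases i using Fin.lastCases with
    | last => simp
    | cast i => right; exact ⟨i, by simp⟩
  · rintro (rfl | ⟨i, rfl⟩)
    · exact ⟨Fin.last n, by simp⟩
    · exact ⟨i.castSucc, by simp⟩

lemma sr_insert {R : Type} [CommRing R] {s : ℕ} (hsr : StableRangeCond R s) :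
    ∀ n, s ≤ n → ∀ (r : Fin n → R) (c : R),
      Ideal.span (insert c (Set.range r)) = ⊤ →
      ∃ t : Fin n → R, Ideal.span (Set.range fun i => r i + t i * c) = ⊤ := by
  intro n hn
  induction n, hn using Nat.le_induction with
  | base =>
    intro r c h
    obtain ⟨t, ht⟩ := hsr (Fin.snoc r c) (by rwa [range_snoc'])
    refine ⟨t, ?_⟩
    simpa [Fin.snoc_castSucc, Fin.snoc_last] using ht
  | succ n hn IH =>
    intro r c h
    -- write 1 = x*c + ∑ y i * r i
    have h1 : (1 : R) ∈ Ideal.span (insert c (Set.range r)) := h ▸ Submodule.mem_top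
    rw [Ideal.mem_span_insert] at h1
    obtain ⟨x, w, hw, hwx⟩ := h1
    obtain ⟨y, hy⟩ := (Submodule.mem_span_range_iff_exists_fun R).mp hw
    set b : R := y (Fin.last n) * r (Fin.last n) + x * c with hb
    have h2 : Ideal.span (insert b (Set.range fun i : Fin n => r i.castSucc)) = ⊤ := by
      rw [Ideal.eq_top_iff_one, Ideal.mem_span_insert]
      refine ⟨1, ∑ i : Fin n, y i.castSucc * r i.castSucc, ?_, ?_⟩
      · exact (Submodule.mem_span_range_iff_exists_fun R).mpr
          ⟨fun i => y i.castSucc, by simp [smul_eq_mul]⟩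
      · have hy' : ∑ i : Fin (n+1), y i * r i = w := by simpa [smul_eq_mul] using hy
        rw [Fin.sum_univ_castSucc] at hy'
        linear_combination hwx - hb - hy'
    obtain ⟨t, ht⟩ := IH (fun i => r i.castSucc) b h2
    refine ⟨Fin.snoc (fun i => t i * x) 0, ?_⟩
    rw [eq_top_iff, ← ht]
    rw [Ideal.span_le]
    rintro _ ⟨i, rfl⟩
    show r i.castSucc + t i * b ∈ _
    have hmem1 : r i.castSucc + (Fin.snoc (fun i => t i * x) 0 : Fin (n+1) → R) i.castSucc * c
        ∈ Ideal.span (Set.range fun i : Fin (n+1) =>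
          r i + (Fin.snoc (fun i => t i * x) 0 : Fin (n+1) → R) i * c) :=
      Ideal.subset_span ⟨i.castSucc, rfl⟩
    have hmem2 : r (Fin.last n) + (Fin.snoc (fun i => t i * x) 0 : Fin (n+1) → R) (Fin.last n) * c
        ∈ Ideal.span (Set.range fun i : Fin (n+1) =>
          r i + (Fin.snoc (fun i => t i * x) 0 : Fin (n+1) → R) i * c) :=
      Ideal.subset_span ⟨Fin.last n, rfl⟩
    have key : r i.castSucc + t i * b =
        (r i.castSucc + (Fin.snoc (fun i => t i * x) 0 : Fin (n+1) → R) i.castSucc * c)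
        + (t i * y (Fin.last n)) *
          (r (Fin.last n) + (Fin.snoc (fun i => t i * x) 0 : Fin (n+1) → R) (Fin.last n) * c) := by
      simp only [Fin.snoc_castSucc, Fin.snoc_last, hb]; ring
    rw [key]
    exact add_mem hmem1 (Ideal.mul_mem_left _ _ hmem2)

lemma sr_fintype {R : Type} [CommRing R] {s : ℕ} (hsr : StableRangeCond R s)
    (ι : Type) [Fintype ι] (hcard : s ≤ Fintype.card ι) (r : ι → R) (c : R)
    (h : Ideal.span (insert c (Set.range r)) = ⊤) :
    ∃ t : ι → R, Ideal.span (Set.range fun i => r i + t i * c) = ⊤ := by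
  set σ := (Fintype.equivFin ι).symm
  have hrange : Set.range (r ∘ σ) = Set.range r := σ.surjective.range_comp r
  obtain ⟨t, ht⟩ := sr_insert hsr (Fintype.card ι) hcard (r ∘ σ) c (by rwa [hrange])
  refine ⟨t ∘ σ.symm, ?_⟩
  have hcomp : ((fun i : ι => r i + (t ∘ σ.symm) i * c) ∘ σ) = fun j => (r ∘ σ) j + t j * c := by
    funext j; simp
  rw [← σ.surjective.range_comp (fun i : ι => r i + (t ∘ σ.symm) i * c), hcomp]
  exact ht

/-- over a ring satisfying the stable range condition `(S_s)`, if `(M, λ)` is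
a formed space with `2·g_H(M,λ) ≥ s` and `l : M → R` is a surjective linear functional, then
there is a hyperbolic pair `e, f` (i.e. `λ(e,f) = 1`) on whose span `l` restricts to a
surjective map, i.e. the ideal generated by `l(e)` and `l(f)` is all of `R`. -/
theorem hyperbolic_summand_unimodular
    (R : Type) [CommRing R] (s : ℕ) (hs : 1 ≤ s) (hsr : StableRangeCond R s)
    (M : Type) [AddCommGroup M] [Module R M] [Module.Finite R M] [Module.Free R M]
    (lam : M →ₗ[R] M →ₗ[R] R) (halt : ∀ v : M, lam v v = 0)
    (l : M →ₗ[R] R) (hl : Function.Surjective l)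
    (hgen : s ≤ 2 * gH R M (fun x y => lam x y)) :
    ∃ e f : M, lam e f = 1 ∧ Ideal.span {l e, l f} = ⊤ := by
  classical
  set S := {g : ℕ | ∃ e f : Fin g → M,
    (∀ i j, lam (e i) (f j) = if i = j then 1 else 0) ∧
    (∀ i j, lam (e i) (e j) = 0) ∧ (∀ i j, lam (f i) (f j) = 0)} with hSdef
  have hgen' : s ≤ 2 * sSup S := hgen
  obtain ⟨g, hgS, hg⟩ : ∃ g ∈ S, s ≤ 2 * g := by
    by_cases hb : BddAbove S
    · have h0 : (0 : ℕ) ∈ S := ⟨Fin.elim0, Fin.elim0, fun i => i.elim0, fun i => i.elim0,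
        fun i => i.elim0⟩
      exact ⟨sSup S, Nat.sSup_mem ⟨0, h0⟩ hb, hgen'⟩
    · obtain ⟨g, hgS, hlt⟩ := not_bddAbove_iff.mp hb s
      exact ⟨g, hgS, by omega⟩
  obtain ⟨e, f, hef, hee, hff⟩ := hgS
  -- skew symmetry
  have hskew : ∀ x y : M, lam x y = - lam y x := by
    intro x y
    have h := halt (x + y)
    simp only [map_add, LinearMap.add_apply, halt] at h
    linear_combination h
  obtain ⟨z, hz⟩ := hl 1
  set z' : M := z - ∑ i : Fin g, lam z (f i) • e i + ∑ i : Fin g, lam z (e i) • f i with hz'def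
  have hez' : ∀ j, lam (e j) z' = 0 := by
    intro j
    simp only [hz'def, map_add, map_sub, map_sum, map_smul, smul_eq_mul, hee, hef,
      mul_ite, mul_one, mul_zero, Finset.sum_ite_eq, Finset.mem_univ, if_true,
      Finset.sum_const_zero, neg_zero, add_zero, zero_add, sub_zero]
    have := hskew (e j) z
    linear_combination this
  have hfz' : ∀ j, lam (f j) z' = 0 := by
    intro j
    have hfe : ∀ i j, lam (f j) (e i) = - if i = j then 1 else 0 := by
      intro i j; rw [hskew, hef]
    simp only [hz'def, map_add, map_sub, map_sum, map_smul, smul_eq_mul, hff, hfe,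
      mul_ite, mul_one, mul_zero, mul_neg, neg_neg, Finset.sum_neg_distrib,
      Finset.sum_ite_eq, Finset.sum_ite_eq', Finset.mem_univ, if_true,
      Finset.sum_const_zero, neg_zero, add_zero, zero_add, sub_zero]
    have := hskew (f j) z
    linear_combination this
  have hz'e : ∀ j, lam z' (e j) = 0 := fun j => by rw [hskew, hez', neg_zero]
  have hz'f : ∀ j, lam z' (f j) = 0 := fun j => by rw [hskew, hfz', neg_zero]
  set A : Fin g ⊕ Fin g → R := Sum.elim (fun i => l (e i)) (fun i => l (f i)) with hA
  set c : R := l z' with hc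
  have hcval : c = 1 - ∑ i : Fin g, lam z (f i) * l (e i) + ∑ i : Fin g, lam z (e i) * l (f i) := by
    simp [hc, hz'def, map_add, map_sub, map_sum, map_smul, smul_eq_mul, hz]
  have hunim : Ideal.span (insert c (Set.range A)) = ⊤ := by
    rw [Ideal.eq_top_iff_one, Ideal.mem_span_insert]
    refine ⟨1, ∑ i : Fin g, lam z (f i) * l (e i) - ∑ i : Fin g, lam z (e i) * l (f i), ?_, ?_⟩
    · refine (Submodule.mem_span_range_iff_exists_fun R).mpr
        ⟨Sum.elim (fun i => lam z (f i)) (fun i => - lam z (e i)), ?_⟩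
      rw [Fintype.sum_sum_type]
      simp only [Sum.elim_inl, Sum.elim_inr, smul_eq_mul, hA, neg_mul,
        Finset.sum_neg_distrib]
      ring
    · rw [hcval]; ring
  have hcard : s ≤ Fintype.card (Fin g ⊕ Fin g) := by
    simp only [Fintype.card_sum, Fintype.card_fin]; omega
  obtain ⟨t, ht⟩ := sr_fintype hsr (Fin g ⊕ Fin g) hcard A c hunim
  set e' : Fin g → M := fun i => e i + t (Sum.inl i) • z' with he'
  set f' : Fin g → M := fun i => f i + t (Sum.inr i) • z' with hf'
  have hzz' : lam z' z' = 0 := halt z'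
  have hef' : ∀ i j, lam (e' i) (f' j) = if i = j then 1 else 0 := by
    intro i j
    simp [he', hf', map_add, map_smul, smul_eq_mul, hef, hez', hz'f, hzz', hz'e]
  have hee' : ∀ i j, lam (e' i) (e' j) = 0 := by
    intro i j
    simp [he', map_add, map_smul, smul_eq_mul, hee, hez', hz'e, hzz']
  have hff' : ∀ i j, lam (f' i) (f' j) = 0 := by
    intro i j
    simp [hf', map_add, map_smul, smul_eq_mul, hff, hfz', hz'f, hzz']
  have hfe' : ∀ i j, lam (f' i) (e' j) = - if j = i then 1 else 0 := by
    intro i j; rw [hskew, hef']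
  have ha' : ∀ i, l (e' i) = A (Sum.inl i) + t (Sum.inl i) * c := by
    intro i; simp [he', hA, hc, map_add, map_smul, smul_eq_mul]
  have hb' : ∀ i, l (f' i) = A (Sum.inr i) + t (Sum.inr i) * c := by
    intro i; simp [hf', hA, hc, map_add, map_smul, smul_eq_mul]
  have h1 : (1 : R) ∈ Ideal.span (Set.range fun i => A i + t i * c) := ht ▸ Submodule.mem_top
  obtain ⟨x, hx⟩ := (Submodule.mem_span_range_iff_exists_fun R).mp h1
  simp only [smul_eq_mul] at hx
  set fstar : M := ∑ i : Fin g, x (Sum.inl i) • e' i + ∑ i : Fin g, x (Sum.inr i) • f' i with hfs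
  set estar : M := ∑ i : Fin g, l (f' i) • e' i - ∑ i : Fin g, l (e' i) • f' i with hes
  have hlf : l fstar = 1 := by
    rw [hfs]
    simp only [map_add, map_sum, map_smul, smul_eq_mul]
    rw [← hx, Fintype.sum_sum_type]
    congr 1
    · exact Finset.sum_congr rfl fun i _ => by rw [ha']
    · exact Finset.sum_congr rfl fun i _ => by rw [hb']
  have hform : lam estar fstar = 1 := by
    rw [hes, hfs]
    simp only [map_add, map_sub, map_sum, map_smul, LinearMap.sum_apply, LinearMap.sub_apply,
      LinearMap.smul_apply, smul_eq_mul, hee', hff', hef', hfe']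
    simp [Finset.mul_sum, mul_ite, Finset.sum_ite_eq, Finset.sum_ite_eq']
    rw [← hx, Fintype.sum_sum_type]
    congr 1
    · exact Finset.sum_congr rfl fun i _ => by rw [ha' i]
    · exact Finset.sum_congr rfl fun i _ => by rw [hb' i]
  refine ⟨estar, fstar, hform, ?_⟩
  rw [Ideal.eq_top_iff_one, ← hlf]
  exact Ideal.subset_span (by simp)
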